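/- arXiv:0904.3349 — 2 statements merged into one kernel-verified Lean document; each statement's English description precedes it below -/
import Mathlib

section
/- In rank 4 with determinant bracket, the meet of a line and a plane satisfies: [a,c,d,e]·b − [b,c,d,e]·a = [d,e,a,b]·c − [c,e,a,b]·d + [c,d,a,b]·e, as vectors. -/
/-!
Laplace expansion along a repeated row shows that the signed maximal minors of an
`n × (n + 1)` matrix form a vector in its kernel. In coordinates an alternating `n`-form on
an `n`-dimensional space is a multiple of the determinant, so any `n + 1` vectors satisfy
`∑ i, (-1)^i ω(v₀, …, v̂ᵢ, …, vₙ) • vᵢ = 0`. For `n = 4` and `(a, b, c, d, e)` this is the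
identity, once each bracket is brought to the order of the statement by an even permutation.
-/

open Matrix in
theorem Matrix.mulVec_signedMinors_eq_zero {R : Type*} [CommRing R] {n : ℕ}
    (A : Matrix (Fin n) (Fin (n + 1)) R) :
    A *ᵥ (fun i ↦ (-1) ^ (i : ℕ) * (A.submatrix id i.succAbove).det) = 0 := by
  ext j
  let M : Matrix (Fin (n + 1)) (Fin (n + 1)) R := of (vecCons (A j) A)
  have hM : M.det = 0 := det_zero_of_row_eq (Fin.succ_ne_zero j).symm rfl
  rw [det_succ_row_zero] at hM
  have hsub (σ : Fin n → Fin (n + 1)) : M.submatrix Fin.succ σ = A.submatrix id σ := rfl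
  simp only [mulVec, dotProduct, Pi.zero_apply]
  refine (Finset.sum_congr rfl fun i _ ↦ ?_).trans hM
  rw [hsub]
  change A j i * _ = _ * A j i * _
  ring

theorem AlternatingMap.sum_alternating_succAbove_smul_eq_zero {R M : Type*} [CommRing R]
    [StrongRankCondition R] [AddCommGroup M] [Module R M] [Module.Free R M] [Module.Finite R M]
    {n : ℕ} (hn : Module.finrank R M = n) (ω : M [⋀^Fin n]→ₗ[R] R) (v : Fin (n + 1) → M) :
    ∑ i : Fin (n + 1), ((-1) ^ (i : ℕ) * ω (v ∘ i.succAbove)) • v i = 0 := by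
  let b := Module.finBasisOfFinrankEq R M hn
  have hminors := congrFun (Matrix.mulVec_signedMinors_eq_zero (b.toMatrix v))
  refine b.forall_coord_eq_zero_iff.mp fun j ↦ ?_
  have hω (i : Fin (n + 1)) :
      ω (v ∘ i.succAbove) = ω b * ((b.toMatrix v).submatrix id i.succAbove).det := by
    conv_lhs => rw [ω.eq_smul_basis_det b]
    rfl
  simp only [map_sum, map_smul, hω, b.coord_apply, Finsupp.coe_finsetSum, Finset.sum_apply,
    Finsupp.smul_apply, smul_eq_mul]
  simp only [Matrix.mulVec, dotProduct, Module.Basis.toMatrix_apply, Pi.zero_apply] at hminors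
  rw [← mul_zero (ω b), ← hminors j, Finset.mul_sum]
  exact Finset.sum_congr rfl fun i _ ↦ by ring

theorem AlternatingMap.map_swap_pairs {R M N : Type*} [Semiring R] [AddCommMonoid M]
    [Module R M] [AddCommGroup N] [Module R N] (ω : M [⋀^Fin 4]→ₗ[R] N) (a b c d : M) :
    ω ![c, d, a, b] = ω ![a, b, c, d] := by
  let σ : Equiv.Perm (Fin 4) := Equiv.swap 0 2 * Equiv.swap 1 3
  have h : ![c, d, a, b] = ![a, b, c, d] ∘ σ := by
    ext i; fin_cases i <;> rfl
  rw [h, ω.map_perm]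
  simp [σ, Equiv.Perm.sign_mul]

theorem stmt_10_general {k V : Type*} [Field k] [AddCommGroup V] [Module k V]
    (hdim : Module.finrank k V = 4) (ω : V [⋀^Fin 4]→ₗ[k] k)
    (a b c d e : V) :
    ω ![a, c, d, e] • b - ω ![b, c, d, e] • a
      = ω ![d, e, a, b] • c - ω ![c, e, a, b] • d + ω ![c, d, a, b] • e := by
  have : Module.Finite k V := Module.finite_of_finrank_eq_succ hdim
  have h := ω.sum_alternating_succAbove_smul_eq_zero hdim ![a, b, c, d, e]
  obtain ⟨h0, h1, h2, h3, h4⟩ :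
      ![a, b, c, d, e] ∘ Fin.succAbove 0 = ![b, c, d, e] ∧
      ![a, b, c, d, e] ∘ Fin.succAbove 1 = ![a, c, d, e] ∧
      ![a, b, c, d, e] ∘ Fin.succAbove 2 = ![a, b, d, e] ∧
      ![a, b, c, d, e] ∘ Fin.succAbove 3 = ![a, b, c, e] ∧
      ![a, b, c, d, e] ∘ Fin.succAbove 4 = ![a, b, c, d] := by
    refine ⟨?_, ?_, ?_, ?_, ?_⟩ <;> ext x <;> fin_cases x <;> rfl
  rw [Fin.sum_univ_five, h0, h1, h2, h3, h4] at h
  simp only [Fin.isValue, Matrix.cons_val] at h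
  norm_num at h
  rw [ω.map_swap_pairs a b d e, ω.map_swap_pairs a b c e, ω.map_swap_pairs a b c d]
  linear_combination (norm := module) -h

theorem stmt_10 {k V : Type*} [Field k] [AddCommGroup V] [Module k V]
    (hdim : Module.finrank k V = 4) (ω : V [⋀^Fin 4]→ₗ[k] k) (hω : ω ≠ 0)
    (a b c d e : V) :
    ω ![a, c, d, e] • b - ω ![b, c, d, e] • a
      = ω ![d, e, a, b] • c - ω ![c, e, a, b] • d + ω ![c, d, a, b] • e :=
  stmt_10_general hdim ω a b c d e
end

section
/- For points a, b, c, d of weight 1 in homogeneous coordinates for the plane (3-dimensional vector space, last coordinate 1), the wedge products satisfy a∧b = c∧d if and only if b − a = d − c and a, b, c, d have collinear affine parts lying on a common line (i.e., c − a is a scalar multiple of b − a), b ≠ a. -/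
/-!
Every pair of coordinate functionals gives an alternating form on `Λ²`, so `x ∧ y` determines
the `2 × 2` minors of `(x, y)`. Since `a ∧ b = a ∧ (b - a)` and `b - a` has weight `0`, the minors
through the last coordinate read off `b - a` from `a ∧ b`; hence `b - a = d - c`, and then
`(c - a) ∧ (b - a) = 0` forces `c - a` onto the line spanned by `b - a ≠ 0`. Conversely, shearing
`c = a + s • (b - a)` along `b - a` does not change the wedge.
-/

open ExteriorAlgebra

section

variable {R M : Type*} [CommRing R] [AddCommGroup M] [Module R M]

theorem ExteriorAlgebra.ι_mul_ι_add_left (x y : M) : ι R x * ι R (x + y) = ι R x * ι R y := by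
  rw [map_add, mul_add, ι_sq_zero, zero_add]

theorem ExteriorAlgebra.ι_add_smul_mul_ι (x y : M) (t : R) :
    ι R (x + t • y) * ι R y = ι R x * ι R y := by
  rw [map_add, add_mul, map_smul, smul_mul_assoc, ι_sq_zero, smul_zero, add_zero]

theorem ExteriorAlgebra.ι_mul_ι_sub (x y : M) : ι R x * ι R (y - x) = ι R x * ι R y := by
  rw [← ι_mul_ι_add_left, add_sub_cancel]

theorem ExteriorAlgebra.ι_mul_ι_eq_ιMulti (x y : M) : ι R x * ι R y = ιMulti R 2 ![x, y] := by
  simp [ιMulti_apply]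

theorem ExteriorAlgebra.apply_mul_apply_sub_eq_of_ι_mul_ι_eq (f g : M →ₗ[R] R) {x y x' y' : M}
    (h : ι R x * ι R y = ι R x' * ι R y') :
    f x * g y - f y * g x = f x' * g y' - f y' * g x' := by
  let minor : M [⋀^Fin 2]→ₗ[R] R := Matrix.detRowAlternating.compLinearMap (LinearMap.pi ![f, g])
  have hminor : ∀ x y, minor ![x, y] = f x * g y - f y * g x := fun x y => by
    change Matrix.det (Matrix.of fun i => LinearMap.pi ![f, g] (![x, y] i)) = _
    simp [Matrix.det_fin_two, mul_comm]
  have := congrArg (liftAlternating (Pi.single 2 minor)) h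
  simpa only [ι_mul_ι_eq_ιMulti, liftAlternating_apply_ιMulti, Pi.single_eq_same, hminor] using this

end

theorem exists_eq_smul_of_mul_eq_mul {ι k : Type*} [Field k] {w u : ι → k} (hu : u ≠ 0)
    (h : ∀ i j, w i * u j = u i * w j) : ∃ s : k, w = s • u := by
  obtain ⟨j, hj⟩ := Function.ne_iff.mp hu
  refine ⟨w j / u j, funext fun i => ?_⟩
  rw [Pi.smul_apply, smul_eq_mul, div_mul_eq_mul_div, mul_comm (w j), ← h,
    mul_div_cancel_right₀ _ hj]

theorem stmt_16 {k : Type*} [Field k]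
    (a b c d : Fin 3 → k) (ha : a 2 = 1) (hb : b 2 = 1) (hc : c 2 = 1) (hd : d 2 = 1)
    (hab : a ≠ b) :
    ι k a * ι k b = ι k c * ι k d ↔
      (d - c = b - a ∧ ∃ s : k, c - a = s • (b - a)) := by
  have minor := fun {x y x' y'} (h : ι k x * ι k y = ι k x' * ι k y') (i j : Fin 3) =>
    apply_mul_apply_sub_eq_of_ι_mul_ι_eq (LinearMap.proj i) (LinearMap.proj j) h
  constructor
  · intro h
    rw [← ι_mul_ι_sub, ← ι_mul_ι_sub c] at h
    have hdc : d - c = b - a := funext fun i => by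
      have hi := minor h i 2
      simp only [LinearMap.coe_proj, Function.eval, Pi.sub_apply, ha, hb, hc, hd] at hi ⊢
      linear_combination hi
    rw [hdc, eq_comm, ← sub_eq_zero, ← sub_mul, ← map_sub] at h
    refine ⟨hdc, exists_eq_smul_of_mul_eq_mul (sub_ne_zero.mpr hab.symm) fun i j => ?_⟩
    have hwedge : ι k (c - a) * ι k (b - a) = ι k 0 * ι k (b - a) := by rw [h, map_zero, zero_mul]
    simpa [sub_eq_zero] using minor hwedge i j
  · rintro ⟨hdc, s, hca⟩
    calc ι k a * ι k b = ι k (a + s • (b - a)) * ι k (b - a) := by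
          rw [ι_add_smul_mul_ι, ι_mul_ι_sub]
      _ = ι k c * ι k d := by rw [← hca, add_sub_cancel, ← hdc, ι_mul_ι_sub]
end
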